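/- Assume that for each T > 0 and t ≥ T the map (ξ₁,ξ₂) ↦ l(t−T,t,ξ₁,ξ₂,u) is twice continuously differentiable. If there exists T > 0 such that the Observability Grammian C(t,T,x(t−T),u) is positive definite for all t ≥ T, then u is weakly persistent at x₀. Conversely, if u is weakly persistent at x₀ and all the associated K-functions κ_t can be chosen with finite sensitivity, then there exists T > 0 such that C(t,T,x(t−T),u) is positive definite for all t ≥ T. -/

import Mathlib

open MeasureTheory Metric Set Filter

/-- State space `ℝ^n` with the Euclidean norm. -/
abbrev Vec (n : ℕ) := EuclideanSpace ℝ (Fin n)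

/-- Cumulative output error
`l(t₁,t₂,ξ₁,ξ₂,u) = ∫_{t₁}^{t₂} ‖h(φ(s;t₁,ξ₁,u),u(s)) − h(φ(s;t₁,ξ₂,u),u(s))‖² ds`. -/
noncomputable def cumError {nx nu ny : ℕ}
    (h : Vec nx → Vec nu → Vec ny) (φ : ℝ → ℝ → Vec nx → Vec nx)
    (u : ℝ → Vec nu) (t₁ t₂ : ℝ) (ξ₁ ξ₂ : Vec nx) : ℝ :=
  ∫ s in t₁..t₂, ‖h (φ s t₁ ξ₁) (u s) - h (φ s t₁ ξ₂) (u s)‖ ^ 2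

/-- A `𝒦`-function: continuous, strictly increasing on `[0,∞)`, vanishing at `0`. -/
def IsKFunction (κ : ℝ → ℝ) : Prop :=
  ContinuousOn κ (Set.Ici 0) ∧ StrictMonoOn κ (Set.Ici 0) ∧ κ 0 = 0

/-- Weakly persistent input trajectory at `x₀`. -/
def WeaklyPersistentAt {nx nu ny : ℕ}
    (h : Vec nx → Vec nu → Vec ny) (φ : ℝ → ℝ → Vec nx → Vec nx)
    (u : ℝ → Vec nu) (x₀ : Vec nx) : Prop :=
  ∃ T > (0 : ℝ), ∀ t ≥ T, ∃ R > (0 : ℝ), ∃ κ : ℝ → ℝ, IsKFunction κ ∧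
    ∀ ξ₁ ∈ Metric.closedBall (φ (t - T) 0 x₀) R,
      ∀ ξ₂ ∈ Metric.closedBall (φ (t - T) 0 x₀) R,
        κ ‖ξ₁ - ξ₂‖ ≤ cumError h φ u (t - T) t ξ₁ ξ₂

/-- A `𝒦`-function with finite sensitivity: `inf{κ(s)/s² : 0 < s ≤ r} > 0` for some `r > 0`. -/
def FiniteSensitivity (κ : ℝ → ℝ) : Prop :=
  ∃ r > (0 : ℝ), ∃ c > (0 : ℝ), ∀ s : ℝ, 0 < s → s ≤ r → c ≤ κ s / s ^ 2

/-- Weakly persistent input trajectory at `x₀` with all associated `𝒦`-functions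
of finite sensitivity. -/
def WeaklyPersistentAtFS {nx nu ny : ℕ}
    (h : Vec nx → Vec nu → Vec ny) (φ : ℝ → ℝ → Vec nx → Vec nx)
    (u : ℝ → Vec nu) (x₀ : Vec nx) : Prop :=
  ∃ T > (0 : ℝ), ∀ t ≥ T, ∃ R > (0 : ℝ), ∃ κ : ℝ → ℝ,
    IsKFunction κ ∧ FiniteSensitivity κ ∧
    ∀ ξ₁ ∈ Metric.closedBall (φ (t - T) 0 x₀) R,
      ∀ ξ₂ ∈ Metric.closedBall (φ (t - T) 0 x₀) R,
        κ ‖ξ₁ - ξ₂‖ ≤ cumError h φ u (t - T) t ξ₁ ξ₂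

/-- Second Fréchet derivative of `ξ ↦ l(t₁,t₂,ξ₁,ξ,u)` at `ξ₂`, as a bilinear form. -/
noncomputable def d2l {nx nu ny : ℕ}
    (h : Vec nx → Vec nu → Vec ny) (φ : ℝ → ℝ → Vec nx → Vec nx)
    (u : ℝ → Vec nu) (t₁ t₂ : ℝ) (ξ₁ ξ₂ v w : Vec nx) : ℝ :=
  iteratedFDeriv ℝ 2 (fun ξ => cumError h φ u t₁ t₂ ξ₁ ξ) ξ₂ ![v, w]

/-- Observability Grammian as a bilinear form. -/
noncomputable def grammian {nx nu ny : ℕ}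
    (h : Vec nx → Vec nu → Vec ny) (φ : ℝ → ℝ → Vec nx → Vec nx)
    (u : ℝ → Vec nu) (x₀ : Vec nx) (t T : ℝ) (v w : Vec nx) : ℝ :=
  (1 / 2) * d2l h φ u (t - T) t (φ (t - T) 0 x₀) (φ (t - T) 0 x₀) v w

/-!
The error `l(ξ₁, ·)` is nonnegative and vanishes at `ξ₁`, so along the segment from `ξ₁` to `ξ₂` it
starts at a minimum and its growth is controlled by its Hessian in `ξ₂`, i.e. by the Grammian.
If the Grammian is positive definite at `x(t-T)`, it is coercive (the state space is
finite-dimensional) and, by continuity of the Hessian, uniformly so near the diagonal point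
`(x(t-T), x(t-T))`; integrating twice gives `l(ξ₁, ξ₂) ≥ c ‖ξ₁ - ξ₂‖²`, a quadratic `𝒦`-function.
Conversely, finite sensitivity gives `l(x, ξ) ≥ c ‖ξ - x‖²` near `x = x(t-T)`, and comparing with
the second-order Taylor upper bound at `x` gives `C(t, T, x, u) ≥ c`.
-/

open Topology ContinuousLinearMap

section OneVariable

variable {g g₁ g₂ : ℝ → ℝ}

theorem le_sub_of_le_deriv2 (hg : ∀ s, HasDerivAt g (g₁ s) s)
    (hg₁ : ∀ s, HasDerivAt g₁ (g₂ s) s) (h₁ : g₁ 0 = 0) {m b : ℝ} (hb : 0 ≤ b)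
    (hm : ∀ s ∈ Icc 0 b, m ≤ g₂ s) :
    m / 2 * b ^ 2 ≤ g b - g 0 := by
  have hψ' : ∀ s, HasDerivAt (fun s => g₁ s - m * s) (g₂ s - m) s := fun s =>
    (hg₁ s).sub (by simpa using (hasDerivAt_id s).const_mul m)
  have hψ'_mono : MonotoneOn (fun s => g₁ s - m * s) (Icc 0 b) := by
    refine monotoneOn_of_deriv_nonneg (convex_Icc 0 b)
      (fun s _ => (hψ' s).continuousAt.continuousWithinAt)
      (fun s _ => (hψ' s).differentiableAt.differentiableWithinAt) fun s hs => ?_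
    rw [interior_Icc] at hs
    rw [(hψ' s).deriv, sub_nonneg]
    exact hm s (Ioo_subset_Icc_self hs)
  have hψ : ∀ s, HasDerivAt (fun s => g s - m / 2 * s ^ 2) (g₁ s - m * s) s := fun s =>
    ((hg s).sub ((hasDerivAt_pow 2 s).const_mul (m / 2))).congr_deriv (by ring)
  have hψ_mono : MonotoneOn (fun s => g s - m / 2 * s ^ 2) (Icc 0 b) := by
    refine monotoneOn_of_deriv_nonneg (convex_Icc 0 b)
      (fun s _ => (hψ s).continuousAt.continuousWithinAt)
      (fun s _ => (hψ s).differentiableAt.differentiableWithinAt) fun s hs => ?_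
    rw [interior_Icc] at hs
    rw [(hψ s).deriv]
    simpa [h₁] using hψ'_mono (left_mem_Icc.2 hb) (Ioo_subset_Icc_self hs) hs.1.le
  have := hψ_mono (left_mem_Icc.2 hb) (right_mem_Icc.2 hb) hb
  simp only at this
  linarith

theorem sub_le_of_deriv2_le (hg : ∀ s, HasDerivAt g (g₁ s) s)
    (hg₁ : ∀ s, HasDerivAt g₁ (g₂ s) s) (h₁ : g₁ 0 = 0) {M b : ℝ} (hb : 0 ≤ b)
    (hM : ∀ s ∈ Icc 0 b, g₂ s ≤ M) :
    g b - g 0 ≤ M / 2 * b ^ 2 := by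
  have := le_sub_of_le_deriv2 (g := -g) (fun s => (hg s).neg) (fun s => (hg₁ s).neg)
    (by simp [h₁]) hb (m := -M) fun s hs => neg_le_neg (hM s hs)
  simp only [Pi.neg_apply] at this
  linarith

theorem two_mul_le_of_add_mul_sq_le (hg : ∀ s, HasDerivAt g (g₁ s) s)
    (hg₁ : ∀ s, HasDerivAt g₁ (g₂ s) s) (h₁ : g₁ 0 = 0) (hg₂ : ContinuousAt g₂ 0) {c : ℝ}
    (hlow : ∀ᶠ s in 𝓝[>] 0, g 0 + c * s ^ 2 ≤ g s) :
    2 * c ≤ g₂ 0 := by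
  refine le_of_forall_pos_le_add fun ε hε => ?_
  obtain ⟨η, hη, hg₂η⟩ := Metric.continuousAt_iff.1 hg₂ ε hε
  obtain ⟨b, hlow_b, hb⟩ := (hlow.and (Ioo_mem_nhdsGT hη)).exists
  have hup := sub_le_of_deriv2_le hg hg₁ h₁ hb.1.le (M := g₂ 0 + ε) fun s hs => by
    have := hg₂η (show dist s 0 < η by
      rw [Real.dist_eq, sub_zero, abs_of_nonneg hs.1]; exact hs.2.trans_lt hb.2)
    linarith [(abs_lt.1 (Real.dist_eq _ _ ▸ this)).2]
  nlinarith [mul_pos hb.1 hb.1]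

end OneVariable

section SecondDerivative

variable {E G : Type*} [NormedAddCommGroup E] [NormedSpace ℝ E]
  [NormedAddCommGroup G] [NormedSpace ℝ G] {Ψ : E → G}

theorem hasDerivAt_comp_add_smul (hΨ : Differentiable ℝ Ψ) (p w : E) (s : ℝ) :
    HasDerivAt (fun s : ℝ => Ψ (p + s • w)) (fderiv ℝ Ψ (p + s • w) w) s := by
  have hline : HasDerivAt (fun s : ℝ => p + s • w) w s := by
    simpa using ((hasDerivAt_id s).smul_const w).const_add p
  exact (hΨ _).hasFDerivAt.comp_hasDerivAt s hline

theorem hasDerivAt_fderiv_comp_add_smul (hΨ : Differentiable ℝ (fderiv ℝ Ψ)) (p w : E) (s : ℝ) :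
    HasDerivAt (fun s : ℝ => fderiv ℝ Ψ (p + s • w) w)
      (fderiv ℝ (fderiv ℝ Ψ) (p + s • w) w w) s := by
  simpa using (hasDerivAt_comp_add_smul hΨ p w s).clm_apply (hasDerivAt_const s w)

theorem iteratedFDeriv_two_comp_prodMk {E' : Type*} [NormedAddCommGroup E'] [NormedSpace ℝ E']
    {F : E × E' → G} (hF : ContDiff ℝ 2 F) (ξ₁ : E) (ξ₂ v w : E') :
    iteratedFDeriv ℝ 2 (fun ξ => F (ξ₁, ξ)) ξ₂ ![v, w] =
      fderiv ℝ (fderiv ℝ F) (ξ₁, ξ₂) (0, v) (0, w) := by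
  have hshift : ContDiff ℝ 2 fun z => F ((ξ₁, 0) + z) := hF.comp (contDiff_const.add contDiff_id)
  have hcomp : (fun ξ => F (ξ₁, ξ)) = (fun z => F ((ξ₁, 0) + z)) ∘ inr ℝ E E' := by
    ext ξ; simp
  rw [hcomp, (inr ℝ E E').iteratedFDeriv_comp_right hshift _ le_rfl]
  simp [iteratedFDeriv_comp_add_left, iteratedFDeriv_two_apply]

end SecondDerivative

section RealValued

variable {E : Type*} [NormedAddCommGroup E] [NormedSpace ℝ E] {Ψ : E → ℝ}

theorem add_le_of_le_fderiv_fderiv (hΨ : ContDiff ℝ 2 Ψ) {p w : E}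
    (hmin : IsLocalMin (fun s : ℝ => Ψ (p + s • w)) 0) {m : ℝ}
    (hm : ∀ s ∈ Icc (0 : ℝ) 1, m ≤ fderiv ℝ (fderiv ℝ Ψ) (p + s • w) w w) :
    Ψ p + m / 2 ≤ Ψ (p + w) := by
  have hg := hasDerivAt_comp_add_smul (hΨ.differentiable (by norm_num)) p w
  have hg₁ := hasDerivAt_fderiv_comp_add_smul
    ((hΨ.fderiv_right (m := 1) le_rfl).differentiable (by norm_num)) p w
  have := le_sub_of_le_deriv2 hg hg₁ (hmin.hasDerivAt_eq_zero (hg 0)) zero_le_one hm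
  simp only [zero_smul, add_zero, one_smul, one_pow, mul_one] at this
  linarith

theorem two_mul_mul_sq_le_iteratedFDeriv_two (hΨ : ContDiff ℝ 2 Ψ) {x : E} {c : ℝ}
    (hc : 0 ≤ c) (hlow : ∀ᶠ ξ in 𝓝 x, Ψ x + c * ‖ξ - x‖ ^ 2 ≤ Ψ ξ) (v : E) :
    2 * c * ‖v‖ ^ 2 ≤ iteratedFDeriv ℝ 2 Ψ x ![v, v] := by
  have hline_cont : Continuous fun s : ℝ => x + s • v := by fun_prop
  have hline : Tendsto (fun s : ℝ => x + s • v) (𝓝 0) (𝓝 x) := by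
    simpa using hline_cont.tendsto 0
  have hlow_line : ∀ᶠ s in 𝓝 (0 : ℝ), Ψ x + c * ‖v‖ ^ 2 * s ^ 2 ≤ Ψ (x + s • v) :=
    (hline.eventually hlow).mono fun s hs => by
      simpa [norm_smul, mul_pow, mul_comm, mul_left_comm] using hs
  have hmin : IsLocalMin (fun s : ℝ => Ψ (x + s • v)) 0 :=
    hlow_line.mono fun s hs => by
      have : 0 ≤ c * ‖v‖ ^ 2 * s ^ 2 := by positivity
      simp only [zero_smul, add_zero]
      linarith
  have hΨ' : ContDiff ℝ 1 (fderiv ℝ Ψ) := hΨ.fderiv_right le_rfl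
  have hg := hasDerivAt_comp_add_smul (hΨ.differentiable (by norm_num)) x v
  have hg₁ := hasDerivAt_fderiv_comp_add_smul (hΨ'.differentiable (by norm_num)) x v
  have hg₂ : Continuous fun s : ℝ => fderiv ℝ (fderiv ℝ Ψ) (x + s • v) v v :=
    (((hΨ'.continuous_fderiv (by norm_num)).comp hline_cont).clm_apply
        continuous_const).clm_apply continuous_const
  have := two_mul_le_of_add_mul_sq_le hg hg₁ (hmin.hasDerivAt_eq_zero (hg 0))
    hg₂.continuousAt (by simpa using hlow_line.filter_mono nhdsWithin_le_nhds)
  simpa [iteratedFDeriv_two_apply, mul_assoc] using this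

end RealValued

section BilinearForm

variable {E : Type*} [NormedAddCommGroup E] [NormedSpace ℝ E]

theorem isCoercive_of_apply_self_pos [FiniteDimensional ℝ E] {B : E →L[ℝ] E →L[ℝ] ℝ}
    (hB : ∀ v ≠ 0, 0 < B v v) : IsCoercive B := by
  rcases subsingleton_or_nontrivial E with hE | hE
  · exact ⟨1, one_pos, fun u => by simp [Subsingleton.elim u 0]⟩
  have hcont : Continuous fun v => B v v := by fun_prop
  obtain ⟨v₀, hv₀, hmin⟩ := (isCompact_sphere (0 : E) 1).exists_isMinOn
    (NormedSpace.sphere_nonempty.2 zero_le_one) hcont.continuousOn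
  rw [mem_sphere_zero_iff_norm] at hv₀
  refine ⟨B v₀ v₀, hB v₀ (norm_ne_zero_iff.1 (by simp [hv₀])), fun u => ?_⟩
  rcases eq_or_ne u 0 with rfl | hu
  · simp
  have hu' : ‖u‖ ≠ 0 := norm_ne_zero_iff.2 hu
  have hmin_u := hmin (show ‖u‖⁻¹ • u ∈ sphere (0 : E) 1 by simp [norm_smul, hu'])
  simp only [mem_ofPred_eq, map_smul, smul_apply, smul_eq_mul] at hmin_u
  calc B v₀ v₀ * ‖u‖ * ‖u‖ ≤ ‖u‖⁻¹ * (‖u‖⁻¹ * B u u) * ‖u‖ * ‖u‖ := by gcongr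
    _ = B u u := by field_simp

theorem apply_self_le_add_norm_sub_mul (B B' : E →L[ℝ] E →L[ℝ] ℝ) (u : E) :
    B u u ≤ B' u u + ‖B - B'‖ * ‖u‖ * ‖u‖ := by
  have h₁ := (B - B').le_opNorm₂ u u
  have h₂ := le_abs_self ((B - B') u u)
  rw [← Real.norm_eq_abs] at h₂
  simp only [sub_apply] at h₁ h₂
  linarith

end BilinearForm

section Product

variable {E E' : Type*} [NormedAddCommGroup E] [NormedSpace ℝ E]
  [NormedAddCommGroup E'] [NormedSpace ℝ E'] [FiniteDimensional ℝ E'] {F : E × E' → ℝ}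

theorem exists_forall_closedBall_mul_sq_le_fderiv_fderiv_inr (hF : ContDiff ℝ 2 F) {q : E × E'}
    (hpos : ∀ v ≠ 0, 0 < fderiv ℝ (fderiv ℝ F) q (0, v) (0, v)) :
    ∃ R > 0, ∃ c > 0, ∀ p ∈ closedBall q R, ∀ v : E',
      c * ‖v‖ ^ 2 ≤ fderiv ℝ (fderiv ℝ F) p (0, v) (0, v) := by
  set D := fderiv ℝ (fderiv ℝ F)
  obtain ⟨C, hC, hcoer⟩ := isCoercive_of_apply_self_pos
    (B := (D q).bilinearComp (inr ℝ E E') (inr ℝ E E')) fun v hv => by simpa using hpos v hv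
  have hD : Continuous D := (hF.fderiv_right (m := 1) le_rfl).continuous_fderiv (by norm_num)
  obtain ⟨R, hR, hball⟩ := nhds_basis_closedBall.eventually_iff.1
    (hD.continuousAt.eventually (closedBall_mem_nhds (D q) (half_pos hC)))
  refine ⟨R, hR, C / 2, half_pos hC, fun p hp v => ?_⟩
  have h₁ := hcoer v
  have h₂ := apply_self_le_add_norm_sub_mul (D q) (D p) (0, v)
  have h₃ : ‖D q - D p‖ ≤ C / 2 :=
    (dist_eq_norm (D q) (D p)).symm.trans_le (dist_comm (D p) (D q) ▸ hball hp)
  simp only [bilinearComp_apply, inr_apply, Prod.norm_mk, norm_zero,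
    max_eq_right (norm_nonneg v)] at h₁ h₂
  nlinarith [norm_nonneg v]

end Product

section Diagonal

variable {E : Type*} [NormedAddCommGroup E] [NormedSpace ℝ E] [FiniteDimensional ℝ E]
  {F : E × E → ℝ}

theorem exists_add_mul_sq_le_of_iteratedFDeriv_two_pos (hF : ContDiff ℝ 2 F)
    (hdiag : ∀ ξ₁ ξ₂, F (ξ₁, ξ₁) ≤ F (ξ₁, ξ₂)) {x : E}
    (hpos : ∀ v ≠ 0, 0 < iteratedFDeriv ℝ 2 (fun ξ => F (x, ξ)) x ![v, v]) :
    ∃ R > 0, ∃ c > 0, ∀ ξ₁ ∈ closedBall x R, ∀ ξ₂ ∈ closedBall x R,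
      F (ξ₁, ξ₁) + c * ‖ξ₁ - ξ₂‖ ^ 2 ≤ F (ξ₁, ξ₂) := by
  obtain ⟨R, hR, c, hc, hlow⟩ := exists_forall_closedBall_mul_sq_le_fderiv_fderiv_inr hF
    fun v hv => iteratedFDeriv_two_comp_prodMk hF x x v v ▸ hpos v hv
  refine ⟨R, hR, c / 2, half_pos hc, fun ξ₁ h₁ ξ₂ h₂ => ?_⟩
  have hline (s : ℝ) : (ξ₁, ξ₁) + s • ((0 : E), ξ₂ - ξ₁) = (ξ₁, ξ₁ + s • (ξ₂ - ξ₁)) := by simp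
  have := add_le_of_le_fderiv_fderiv hF (p := (ξ₁, ξ₁)) (w := (0, ξ₂ - ξ₁))
    (m := c * ‖ξ₂ - ξ₁‖ ^ 2)
    (Eventually.of_forall fun s => by simpa only [hline, zero_smul, add_zero] using hdiag ξ₁ _)
    fun s hs => hlow _ (by
      rw [hline, mem_closedBall, Prod.dist_eq]
      exact max_le h₁ ((convex_closedBall x R).add_smul_sub_mem h₁ h₂ hs)) _
  simp only [Prod.mk_add_mk, add_zero, add_sub_cancel, norm_sub_rev ξ₂ ξ₁] at this
  linarith

end Diagonal

section ObservabilityGrammian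

variable {nx nu ny : ℕ} (h : Vec nx → Vec nu → Vec ny) (φ : ℝ → ℝ → Vec nx → Vec nx)
  (u : ℝ → Vec nu)

theorem cumError_self (t₁ t₂ : ℝ) (ξ : Vec nx) : cumError h φ u t₁ t₂ ξ ξ = 0 := by
  simp [cumError]

theorem cumError_nonneg {t₁ t₂ : ℝ} (ht : t₁ ≤ t₂) (ξ₁ ξ₂ : Vec nx) :
    0 ≤ cumError h φ u t₁ t₂ ξ₁ ξ₂ :=
  intervalIntegral.integral_nonneg ht fun _ _ => by positivity

end ObservabilityGrammian

theorem isKFunction_const_mul_sq {c : ℝ} (hc : 0 < c) : IsKFunction fun s => c * s ^ 2 :=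
  ⟨by fun_prop, fun a ha _ _ hab => by
    have : 0 ≤ a := ha
    dsimp only
    gcongr, by simp⟩

theorem FiniteSensitivity.exists_mul_sq_le {κ : ℝ → ℝ} (hκ : FiniteSensitivity κ) (h0 : κ 0 = 0) :
    ∃ r > 0, ∃ c > 0, ∀ s ∈ Icc 0 r, c * s ^ 2 ≤ κ s := by
  obtain ⟨r, hr, c, hc, hκc⟩ := hκ
  refine ⟨r, hr, c, hc, fun s ⟨hs₀, hsr⟩ => ?_⟩
  rcases hs₀.eq_or_lt with rfl | hs₀
  · simp [h0]
  exact (le_div_iff₀ (by positivity)).1 (hκc s hs₀ hsr)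

theorem weaklyPersistentAt_of_grammian_pos {nx nu ny : ℕ} {h : Vec nx → Vec nu → Vec ny}
    {u : ℝ → Vec nu} {φ : ℝ → ℝ → Vec nx → Vec nx} {x₀ : Vec nx}
    (hC2 : ∀ T > (0 : ℝ), ∀ t ≥ T,
      ContDiff ℝ 2 (fun p : Vec nx × Vec nx => cumError h φ u (t - T) t p.1 p.2))
    (hpos : ∃ T > (0 : ℝ), ∀ t ≥ T, ∀ v : Vec nx, v ≠ 0 → 0 < grammian h φ u x₀ t T v v) :
    WeaklyPersistentAt h φ u x₀ := by
  obtain ⟨T, hT, hpos⟩ := hpos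
  refine ⟨T, hT, fun t ht => ?_⟩
  obtain ⟨R, hR, c, hc, hle⟩ := exists_add_mul_sq_le_of_iteratedFDeriv_two_pos (hC2 T hT t ht)
    (fun ξ₁ ξ₂ => by simpa [cumError_self] using cumError_nonneg h φ u (by linarith) ξ₁ ξ₂)
    fun v hv => by simpa [grammian, d2l] using hpos t ht v hv
  exact ⟨R, hR, _, isKFunction_const_mul_sq hc, fun ξ₁ h₁ ξ₂ h₂ => by
    simpa [cumError_self] using hle ξ₁ h₁ ξ₂ h₂⟩

theorem grammian_pos_of_weaklyPersistentAtFS {nx nu ny : ℕ} {h : Vec nx → Vec nu → Vec ny}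
    {u : ℝ → Vec nu} {φ : ℝ → ℝ → Vec nx → Vec nx} {x₀ : Vec nx}
    (hC2 : ∀ T > (0 : ℝ), ∀ t ≥ T,
      ContDiff ℝ 2 (fun p : Vec nx × Vec nx => cumError h φ u (t - T) t p.1 p.2))
    (hwp : WeaklyPersistentAtFS h φ u x₀) :
    ∃ T > (0 : ℝ), ∀ t ≥ T, ∀ v : Vec nx, v ≠ 0 → 0 < grammian h φ u x₀ t T v v := by
  obtain ⟨T, hT, hwp⟩ := hwp
  refine ⟨T, hT, fun t ht v hv => ?_⟩
  obtain ⟨R, hR, κ, hκ, hκs, hle⟩ := hwp t ht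
  obtain ⟨r, hr, c, hc, hκc⟩ := hκs.exists_mul_sq_le hκ.2.2
  set x := φ (t - T) 0 x₀
  have hlow : ∀ᶠ ξ in 𝓝 x, cumError h φ u (t - T) t x x + c * ‖ξ - x‖ ^ 2 ≤
      cumError h φ u (t - T) t x ξ := by
    filter_upwards [closedBall_mem_nhds x (lt_min hR hr)] with ξ hξ
    have hξ' : ‖x - ξ‖ ≤ min R r := by rwa [norm_sub_rev, ← dist_eq_norm]
    rw [cumError_self, zero_add, norm_sub_rev]
    exact (hκc _ ⟨norm_nonneg _, hξ'.trans (min_le_right _ _)⟩).trans <|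
      hle x (mem_closedBall_self hR.le) ξ (closedBall_subset_closedBall (min_le_left _ _) hξ)
  have hG : ContDiff ℝ 2 fun ξ => cumError h φ u (t - T) t x ξ :=
    ((hC2 T hT t ht).comp (contDiff_const.prodMk contDiff_id) :)
  have := two_mul_mul_sq_le_iteratedFDeriv_two hG hc.le hlow v
  have : 0 < c * ‖v‖ ^ 2 := by positivity
  simp only [grammian, d2l]
  linarith

theorem stmt7_general {nx nu ny : ℕ}
    (h : Vec nx → Vec nu → Vec ny)
    (u : ℝ → Vec nu) (φ : ℝ → ℝ → Vec nx → Vec nx) (x₀ : Vec nx)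
    (hC2 : ∀ T > (0 : ℝ), ∀ t ≥ T,
      ContDiff ℝ 2 (fun p : Vec nx × Vec nx => cumError h φ u (t - T) t p.1 p.2)) :
    ((∃ T > (0 : ℝ), ∀ t ≥ T,
        ∀ v : Vec nx, v ≠ 0 → 0 < grammian h φ u x₀ t T v v) →
      WeaklyPersistentAt h φ u x₀) ∧
    (WeaklyPersistentAtFS h φ u x₀ →
      ∃ T > (0 : ℝ), ∀ t ≥ T,
        ∀ v : Vec nx, v ≠ 0 → 0 < grammian h φ u x₀ t T v v) :=
  ⟨weaklyPersistentAt_of_grammian_pos hC2, grammian_pos_of_weaklyPersistentAtFS hC2⟩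

/-- positive definiteness of the Observability Grammian implies weak
persistence; conversely, weak persistence with finite-sensitivity `𝒦`-functions
implies positive definiteness of the Grammian. -/
theorem stmt7 {nx nu ny : ℕ}
    (f : Vec nx → Vec nu → Vec nx) (h : Vec nx → Vec nu → Vec ny)
    (u : ℝ → Vec nu) (φ : ℝ → ℝ → Vec nx → Vec nx) (x₀ : Vec nx)
    (hf : ContDiff ℝ 2 (Function.uncurry f))
    (hh : ContDiff ℝ 2 (Function.uncurry h))
    (hflow_init : ∀ s₁ : ℝ, 0 ≤ s₁ → ∀ ξ, φ s₁ s₁ ξ = ξ)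
    (hflow_ode : ∀ s₁ s : ℝ, 0 ≤ s₁ → s₁ ≤ s → ∀ ξ,
      HasDerivAt (fun τ => φ τ s₁ ξ) (f (φ s s₁ ξ) (u s)) s)
    (hC2 : ∀ T > (0 : ℝ), ∀ t ≥ T,
      ContDiff ℝ 2 (fun p : Vec nx × Vec nx => cumError h φ u (t - T) t p.1 p.2)) :
    ((∃ T > (0 : ℝ), ∀ t ≥ T,
        ∀ v : Vec nx, v ≠ 0 → 0 < grammian h φ u x₀ t T v v) →
      WeaklyPersistentAt h φ u x₀) ∧
    (WeaklyPersistentAtFS h φ u x₀ →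
      ∃ T > (0 : ℝ), ∀ t ≥ T,
        ∀ v : Vec nx, v ≠ 0 → 0 < grammian h φ u x₀ t T v v) :=
  stmt7_general h u φ x₀ hC2
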